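/- Let G and H be finite simple graphs with χ_v(G) < χ_v(H). Then rk(G × H) ≥ rk(G), and equality rk(G × H) = rk(G) holds if and only if every optimal vector coloring of G × H is induced by G. -/

import Mathlib

open Matrix Kronecker

noncomputable section VectorColoring

variable {V α β : Type*}

/-- A vector `t`-coloring of a graph `G`: vectors `p i` with `p i ⬝ᵥ p i = t - 1`
and `p i ⬝ᵥ p j ≤ -1` on edges. -/
def IsVecColoring [Fintype V] (G : SimpleGraph V) (t : ℝ) {d : ℕ}
    (p : V → Fin d → ℝ) : Prop :=
  (∀ i, p i ⬝ᵥ p i = t - 1) ∧ ∀ i j, G.Adj i j → p i ⬝ᵥ p j ≤ -1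

/-- The vector chromatic number: the least `t ≥ 1` admitting a vector `t`-coloring. -/
def vecChrom [Fintype V] (G : SimpleGraph V) : ℝ :=
  sInf {t : ℝ | 1 ≤ t ∧ ∃ (d : ℕ) (p : V → Fin d → ℝ), IsVecColoring G t p}

/-- A strict vector `t`-coloring: `p i ⬝ᵥ p j = -1` on edges. -/
def IsStrictVecColoring [Fintype V] (G : SimpleGraph V) (t : ℝ) {d : ℕ}
    (p : V → Fin d → ℝ) : Prop :=
  (∀ i, p i ⬝ᵥ p i = t - 1) ∧ ∀ i j, G.Adj i j → p i ⬝ᵥ p j = -1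

/-- The strict vector chromatic number. -/
def strictVecChrom [Fintype V] (G : SimpleGraph V) : ℝ :=
  sInf {t : ℝ | 1 ≤ t ∧ ∃ (d : ℕ) (p : V → Fin d → ℝ), IsStrictVecColoring G t p}

/-- The Gram matrix of a family of vectors. -/
def gramMat {d : ℕ} (p : V → Fin d → ℝ) : Matrix V V ℝ :=
  Matrix.of fun i j => p i ⬝ᵥ p j

/-- `M` is the Gram matrix of an optimal vector coloring of `G`. -/
def IsOptGram [Fintype V] (G : SimpleGraph V) (M : Matrix V V ℝ) : Prop :=
  ∃ (d : ℕ) (p : V → Fin d → ℝ), IsVecColoring G (vecChrom G) p ∧ M = gramMat p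

/-- `grk G = rk(G)`: the maximum rank of the Gram matrix of an optimal vector coloring. -/
def grk [Fintype V] (G : SimpleGraph V) : ℕ :=
  sSup {r : ℕ | ∃ M : Matrix V V ℝ, IsOptGram G M ∧ M.rank = r}

/-- The categorical (tensor) product of graphs. -/
def catProd (G : SimpleGraph α) (H : SimpleGraph β) : SimpleGraph (α × β) where
  Adj x y := G.Adj x.1 y.1 ∧ H.Adj x.2 y.2
  symm := ⟨by intro x y hxy; exact ⟨hxy.1.symm, hxy.2.symm⟩⟩
  loopless := ⟨by intro x hx; exact G.irrefl hx.1⟩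

/-- A feasible dual solution for `vecChrom G`. -/
def IsDualSol [Fintype V] (G : SimpleGraph V) (B : Matrix V V ℝ) : Prop :=
  B.PosSemidef ∧ (∀ i j, i ≠ j → ¬ G.Adj i j → B i j = 0) ∧
    (∀ i j, 0 ≤ B i j) ∧ B.trace = 1

/-- An optimal dual solution for `vecChrom G`: feasible with objective value `vecChrom G`. -/
def IsOptDual [Fintype V] (G : SimpleGraph V) (B : Matrix V V ℝ) : Prop :=
  IsDualSol G B ∧ (∑ i, ∑ j, B i j) = vecChrom G

/-- The all-ones matrix `J`. -/
def allOnes (γ : Type*) : Matrix γ γ ℝ :=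
  Matrix.of fun _ _ => 1

/-- The graph `G(B)` of a (symmetric) matrix `B`: distinct `i, j` adjacent iff `B i j ≠ 0`. -/
def matGraph (B : Matrix V V ℝ) : SimpleGraph V where
  Adj i j := i ≠ j ∧ B i j ≠ 0 ∧ B j i ≠ 0
  symm := ⟨by intro i j hij; exact ⟨hij.1.symm, hij.2.2, hij.2.1⟩⟩
  loopless := ⟨by intro i hi; exact hi.1 rfl⟩

/-- The spanning subgraph `G^p` of edges tight in the vector coloring `p`. -/
def tightSub [Fintype V] (G : SimpleGraph V) {d : ℕ} (p : V → Fin d → ℝ) :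
    SimpleGraph V where
  Adj i j := G.Adj i j ∧ p i ⬝ᵥ p j = -1
  symm := ⟨by
    intro i j hij
    exact ⟨hij.1.symm, by rw [dotProduct_comm]; exact hij.2⟩⟩
  loopless := ⟨by intro i hi; exact G.irrefl hi.1⟩

/-- The skeleton `G^sk`: the spanning subgraph of edges tight in every optimal
vector coloring. -/
def skeleton [Fintype V] (G : SimpleGraph V) : SimpleGraph V where
  Adj i j := G.Adj i j ∧ ∀ (d : ℕ) (p : V → Fin d → ℝ),
      IsVecColoring G (vecChrom G) p → p i ⬝ᵥ p j = -1
  symm := ⟨by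
    intro i j hij
    refine ⟨hij.1.symm, fun d p hp => ?_⟩
    rw [dotProduct_comm]
    exact hij.2 d p hp⟩
  loopless := ⟨by intro i hi; exact G.irrefl hi.1⟩

/-- `i` is neighborly in the vector coloring `p`: `-p i` lies in the conical hull of
the vectors of the `∼_p`-neighbours of `i`. -/
def NeighborlyIn [Fintype V] (G : SimpleGraph V) {d : ℕ} (p : V → Fin d → ℝ)
    (i : V) : Prop :=
  ∃ c : V → ℝ, (∀ j, 0 ≤ c j) ∧ (∀ j, c j ≠ 0 → G.Adj i j ∧ p i ⬝ᵥ p j = -1) ∧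
    -p i = ∑ j, c j • p j

/-- `i` is neighborly: neighborly in every optimal vector coloring. -/
def Neighborly [Fintype V] (G : SimpleGraph V) (i : V) : Prop :=
  ∀ (d : ℕ) (p : V → Fin d → ℝ), IsVecColoring G (vecChrom G) p → NeighborlyIn G p i

/-- `i →_p j`: `-p i = ∑ α_l • p l` over `∼_p`-neighbours `l` of `i`, with `α_j > 0`. -/
def ArrowIn [Fintype V] (G : SimpleGraph V) {d : ℕ} (p : V → Fin d → ℝ)
    (i j : V) : Prop :=
  ∃ c : V → ℝ, (∀ l, 0 ≤ c l) ∧ (∀ l, c l ≠ 0 → G.Adj i l ∧ p i ⬝ᵥ p l = -1) ∧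
    0 < c j ∧ -p i = ∑ l, c l • p l

/-- `μ` is an eigenvalue of `M`. -/
def IsEigenvalue [Fintype V] (M : Matrix V V ℝ) (μ : ℝ) : Prop :=
  ∃ v : V → ℝ, v ≠ 0 ∧ M *ᵥ v = μ • v

/-- `lam` is the largest eigenvalue of `M`. -/
def IsMaxEigenvalue [Fintype V] (M : Matrix V V ℝ) (lam : ℝ) : Prop :=
  IsGreatest {μ : ℝ | IsEigenvalue M μ} lam

/-- `lam` is the smallest eigenvalue of `M`. -/
def IsMinEigenvalue [Fintype V] (M : Matrix V V ℝ) (lam : ℝ) : Prop :=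
  IsLeast {μ : ℝ | IsEigenvalue M μ} lam

/-- The eigenspace of `M` for `μ`. -/
def eigSpace [Fintype V] (M : Matrix V V ℝ) (μ : ℝ) : Submodule ℝ (V → ℝ) :=
  LinearMap.ker (M.mulVecLin - μ • (LinearMap.id : (V → ℝ) →ₗ[ℝ] V → ℝ))

/-- `W` is (the Gram matrix of) a convex combination of vector colorings of `G × H`
induced by `G` and by `H`: `W = a • (M ⊗ J) + b • (J ⊗ N)`. -/
def IsConvexCombInduced [Fintype α] [Fintype β] (G : SimpleGraph α) (H : SimpleGraph β)
    (W : Matrix (α × β) (α × β) ℝ) : Prop :=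
  ∃ (a b : ℝ) (M : Matrix α α ℝ) (N : Matrix β β ℝ),
    0 ≤ a ∧ 0 ≤ b ∧ a + b = 1 ∧ IsOptGram G M ∧ IsOptGram H N ∧
    W = a • (M ⊗ₖ allOnes β) + b • (allOnes α ⊗ₖ N)

end VectorColoring

/-!
Colorings of `G` induce colorings of `G × H`, so `χ_v(G × H) ≤ χ_v(G)`. Conversely, optimal
solutions `B`, `C` of the dual semidefinite program of `G` and `H` (obtained by separating
`χ_v(G) • 1 - J` from an open convex set) combine into a dual solution of `G × H` of value
`χ_v(G)` as soon as `χ_v(G) ≤ χ_v(H)`; its positive semidefiniteness comes from complementary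
slackness. Hence optimal colorings of `G` induce optimal colorings of `G × H` of the same rank,
and `rk(G) ≤ rk(G × H)`.

If equality holds, let `K = M ⊗ J` be induced by an optimal coloring of `G` of maximal rank.
For any optimal `W`, the midpoint of `W` and `K` is optimal, so its rank is at most that of `K`,
which forces `ker K ≤ ker W`. The columns `(j, k)` and `(j, k')` of `K` agree, hence so do those
of `W`, i.e. `W` is induced by `G`.
-/

open scoped Pointwise

section RankProduct

variable {V α β : Type*}

section Gram

lemma gramMat_eq_mul_transpose {d : ℕ} (p : V → Fin d → ℝ) :
    gramMat p = Matrix.of p * (Matrix.of p)ᵀ := rfl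

lemma posSemidef_gramMat [Fintype V] {d : ℕ} (p : V → Fin d → ℝ) : (gramMat p).PosSemidef := by
  simpa [gramMat_eq_mul_transpose] using posSemidef_self_mul_conjTranspose (Matrix.of p)

lemma rank_gramMat [Fintype V] {d : ℕ} (p : V → Fin d → ℝ) :
    (gramMat p).rank = Module.finrank ℝ (Submodule.span ℝ (Set.range p)) := by
  rw [gramMat_eq_mul_transpose, rank_self_mul_transpose, rank_eq_finrank_span_row]
  rfl

lemma Matrix.PosSemidef.exists_eq_gramMat [Fintype V] {M : Matrix V V ℝ} (hM : M.PosSemidef) :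
    ∃ p : V → Fin (Fintype.card V) → ℝ, M = gramMat p := by
  classical
  open scoped MatrixOrder in
  obtain ⟨B, rfl⟩ := CStarAlgebra.nonneg_iff_eq_star_mul_self.mp hM.nonneg
  let e := Fintype.equivFin V
  refine ⟨fun i r => B (e.symm r) i, ?_⟩
  ext i j
  simp only [gramMat, Matrix.of_apply, dotProduct, star_eq_conjTranspose, mul_apply,
    conjTranspose_apply, star_trivial]
  exact (e.symm.sum_comp fun v => B v i * B v j).symm

lemma gramMat_comp_fst {d : ℕ} (p : α → Fin d → ℝ) :
    gramMat (fun x : α × β => p x.1) = gramMat p ⊗ₖ allOnes β := by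
  ext x y
  simp [gramMat, allOnes]

lemma rank_gramMat_comp_fst [Fintype α] [Fintype β] [Nonempty β] {d : ℕ} (p : α → Fin d → ℝ) :
    (gramMat (fun x : α × β => p x.1)).rank = (gramMat p).rank := by
  have hrange : Set.range (fun x : α × β => p x.1) = Set.range p :=
    (Prod.fst_surjective (β := β)).range_comp p
  rw [rank_gramMat, rank_gramMat]
  exact congrArg (fun s => Module.finrank ℝ (Submodule.span ℝ s)) hrange

end Gram

section VecChrom

variable [Fintype V] {G : SimpleGraph V}

lemma Matrix.PosSemidef.exists_isVecColoring {M : Matrix V V ℝ} {t : ℝ} (hM : M.PosSemidef)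
    (hdiag : ∀ i, M i i = t - 1) (hadj : ∀ i j, G.Adj i j → M i j ≤ -1) :
    ∃ p : V → Fin (Fintype.card V) → ℝ, IsVecColoring G t p ∧ gramMat p = M := by
  obtain ⟨p, rfl⟩ := hM.exists_eq_gramMat
  exact ⟨p, ⟨hdiag, hadj⟩, rfl⟩

lemma IsVecColoring.exists_fin_card {t : ℝ} {d : ℕ} {p : V → Fin d → ℝ}
    (hp : IsVecColoring G t p) : ∃ q : V → Fin (Fintype.card V) → ℝ, IsVecColoring G t q := by
  obtain ⟨q, hq, -⟩ := (posSemidef_gramMat p).exists_isVecColoring hp.1 hp.2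
  exact ⟨q, hq⟩

lemma Matrix.PosSemidef.exists_isVecColoring_of_diag_le {M : Matrix V V ℝ} {r : ℝ}
    (hM : M.PosSemidef) (hdiag : ∀ i, M i i ≤ r) (hadj : ∀ i j, G.Adj i j → M i j ≤ -1) :
    ∃ p : V → Fin (Fintype.card V) → ℝ, IsVecColoring G (1 + r) p := by
  classical
  have hD : (diagonal fun i => r - M i i).PosSemidef :=
    PosSemidef.diagonal fun i => sub_nonneg.mpr (hdiag i)
  obtain ⟨p, hp, -⟩ := (hM.add hD).exists_isVecColoring (t := 1 + r) (G := G)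
    (fun i => by simp) (fun i j hij => by simpa [hij.ne] using hadj i j hij)
  exact ⟨p, hp⟩

lemma vecChrom_le {t : ℝ} {d : ℕ} {p : V → Fin d → ℝ} (ht : 1 ≤ t)
    (hp : IsVecColoring G t p) : vecChrom G ≤ t :=
  csInf_le ⟨1, fun _ hs => hs.1⟩ ⟨ht, d, p, hp⟩

lemma Matrix.PosSemidef.vecChrom_le {M : Matrix V V ℝ} {r : ℝ} (hM : M.PosSemidef) (hr : 0 ≤ r)
    (hdiag : ∀ i, M i i ≤ r) (hadj : ∀ i j, G.Adj i j → M i j ≤ -1) : vecChrom G ≤ 1 + r := by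
  obtain ⟨p, hp⟩ := hM.exists_isVecColoring_of_diag_le hdiag hadj
  exact _root_.vecChrom_le (by linarith) hp

lemma exists_isVecColoring (G : SimpleGraph V) :
    ∃ t, 1 ≤ t ∧ ∃ p : V → Fin (Fintype.card V) → ℝ, IsVecColoring G t p := by
  classical
  set n : ℝ := (Fintype.card V : ℝ)
  have hn : 0 ≤ n := by positivity
  set A : Matrix V V ℝ := (n + 1) • (1 : Matrix V V ℝ) - allOnes V
  have hentry : ∀ i j, (Aᴴ * A) i j = (n + 1) ^ 2 * (if i = j then 1 else 0) - n - 2 := by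
    intro i j
    simp [A, allOnes, mul_apply, one_apply, sub_mul, mul_sub, Finset.sum_sub_distrib,
      Finset.sum_ite_eq', n]
    split_ifs <;> ring
  obtain ⟨p, hp⟩ := (posSemidef_conjTranspose_mul_self A).exists_isVecColoring_of_diag_le
    (G := G) (r := (n + 1) ^ 2) (fun i => by rw [hentry, if_pos rfl]; linarith)
    (fun i j hij => by rw [hentry, if_neg hij.ne]; linarith)
  exact ⟨1 + (n + 1) ^ 2, by nlinarith, p, hp⟩

lemma one_le_vecChrom (G : SimpleGraph V) : 1 ≤ vecChrom G := by
  obtain ⟨t, ht, p, hp⟩ := exists_isVecColoring G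
  exact le_csInf ⟨t, ht, _, p, hp⟩ fun _ hs => hs.1

lemma exists_adj_of_one_lt_vecChrom (h : 1 < vecChrom G) : ∃ i j, G.Adj i j := by
  by_contra! hG
  have : IsVecColoring G 1 fun _ => (0 : Fin 0 → ℝ) :=
    ⟨fun _ => by simp, fun i j hij => (hG i j hij).elim⟩
  exact (vecChrom_le le_rfl this).not_gt h

lemma isClosed_setOf_isVecColoring (G : SimpleGraph V) (d : ℕ) :
    IsClosed {q : ℝ × (V → Fin d → ℝ) | IsVecColoring G q.1 q.2} := by
  simp only [IsVecColoring, Set.ofPred_and, Set.ofPred_forall]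
  refine .inter (isClosed_iInter fun i => isClosed_eq ?_ ?_)
    (isClosed_iInter fun i => isClosed_iInter fun j => isClosed_iInter fun _ => isClosed_le ?_ ?_)
  all_goals fun_prop

lemma IsVecColoring.abs_apply_le {t : ℝ} {d : ℕ} {p : V → Fin d → ℝ}
    (hp : IsVecColoring G t p) (ht : 1 ≤ t) (i : V) (r : Fin d) : |p i r| ≤ t := by
  refine abs_le_of_sq_le_sq ?_ (by linarith)
  have : p i r ^ 2 ≤ p i ⬝ᵥ p i := by
    rw [dotProduct, sq]
    exact Finset.single_le_sum (f := fun r => p i r * p i r)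
      (fun r _ => mul_self_nonneg (p i r)) (Finset.mem_univ r)
  rw [hp.1 i] at this
  nlinarith

lemma exists_isVecColoring_vecChrom (G : SimpleGraph V) :
    ∃ p : V → Fin (Fintype.card V) → ℝ, IsVecColoring G (vecChrom G) p := by
  obtain ⟨T, hT, p₁, hp₁⟩ := exists_isVecColoring G
  set C : Set (ℝ × (V → Fin (Fintype.card V) → ℝ)) :=
    {q | q.1 ∈ Set.Icc 1 T ∧ IsVecColoring G q.1 q.2}
  have hC : IsCompact C := by
    refine ((isCompact_Icc (a := 1) (b := T)).prod (isCompact_univ_pi fun _ =>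
      isCompact_univ_pi fun _ => isCompact_Icc (a := -T) (b := T))).of_isClosed_subset
      ((isClosed_Icc.preimage continuous_fst).inter (isClosed_setOf_isVecColoring G _)) ?_
    rintro ⟨t, p⟩ ⟨ht, hp⟩
    refine ⟨ht, fun i _ r _ => abs_le.mp ((hp.abs_apply_le ht.1 i r).trans ht.2)⟩
  obtain ⟨⟨t₀, p₀⟩, ⟨ht₀, hp₀⟩, hmin⟩ :=
    hC.exists_isMinOn ⟨(T, p₁), ⟨hT, le_rfl⟩, hp₁⟩ continuous_fst.continuousOn
  suffices vecChrom G = t₀ from ⟨p₀, this ▸ hp₀⟩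
  refine le_antisymm (vecChrom_le ht₀.1 hp₀) (le_csInf ⟨T, hT, _, p₁, hp₁⟩ ?_)
  rintro t ⟨ht, d, p, hp⟩
  obtain ⟨q, hq⟩ := hp.exists_fin_card
  rcases le_or_gt t T with htT | hTt
  · exact hmin (a := (t, q)) ⟨⟨ht, htT⟩, hq⟩
  · exact ht₀.2.trans hTt.le

lemma isOptGram_iff {M : Matrix V V ℝ} :
    IsOptGram G M ↔ M.PosSemidef ∧ (∀ i, M i i = vecChrom G - 1) ∧
      ∀ i j, G.Adj i j → M i j ≤ -1 := by
  constructor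
  · rintro ⟨d, p, hp, rfl⟩
    exact ⟨posSemidef_gramMat p, hp⟩
  · rintro ⟨hM, hdiag, hadj⟩
    obtain ⟨p, hp, hpM⟩ := hM.exists_isVecColoring hdiag hadj
    exact ⟨_, p, hp, hpM.symm⟩

end VecChrom

section WeakDuality

variable [Fintype V] {G : SimpleGraph V}

lemma sum_sum_mul_nonneg {A B : Matrix V V ℝ} (hA : A.PosSemidef) (hB : B.PosSemidef) :
    0 ≤ ∑ i, ∑ j, A i j * B i j := by
  simpa [dotProduct, mulVec, Finset.sum_apply] using (hA.hadamard hB).dotProduct_mulVec_nonneg 1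

lemma sum_sum_mul_smul_one_sub_allOnes [DecidableEq V] (B : Matrix V V ℝ) (t : ℝ) :
    ∑ i, ∑ j, B i j * (t • (1 : Matrix V V ℝ) - allOnes V) i j =
      t * B.trace - ∑ i, ∑ j, B i j := by
  simp [allOnes, one_apply, mul_sub, Finset.sum_sub_distrib, trace, Finset.mul_sum, mul_comm]

lemma IsDualSol.mul_le [DecidableEq V] {B : Matrix V V ℝ} (hB : IsDualSol G B) {t : ℝ} {d : ℕ}
    {p : V → Fin d → ℝ} (hp : IsVecColoring G t p) (i j : V) :
    B i j * gramMat p i j ≤ B i j * (t • (1 : Matrix V V ℝ) - allOnes V) i j := by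
  obtain ⟨-, hzero, hnonneg, -⟩ := hB
  by_cases hij : i = j
  · subst hij
    simp [gramMat, allOnes, hp.1 i]
  by_cases hadj : G.Adj i j
  · simpa [gramMat, allOnes, hij] using mul_le_mul_of_nonneg_left (hp.2 i j hadj) (hnonneg i j)
  · simp [hzero i j hij hadj]

lemma IsDualSol.sum_le {B : Matrix V V ℝ} (hB : IsDualSol G B) {t : ℝ} {d : ℕ}
    {p : V → Fin d → ℝ} (hp : IsVecColoring G t p) : ∑ i, ∑ j, B i j ≤ t := by
  classical
  have h := sum_sum_mul_nonneg hB.1 (posSemidef_gramMat p)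
  have hle := Finset.sum_le_sum fun i (_ : i ∈ Finset.univ) =>
    Finset.sum_le_sum fun j (_ : j ∈ Finset.univ) => hB.mul_le hp i j
  rw [sum_sum_mul_smul_one_sub_allOnes, hB.2.2.2, mul_one] at hle
  linarith

lemma IsDualSol.sum_le_vecChrom {B : Matrix V V ℝ} (hB : IsDualSol G B) :
    ∑ i, ∑ j, B i j ≤ vecChrom G := by
  obtain ⟨t, ht, p, hp⟩ := exists_isVecColoring G
  exact le_csInf ⟨t, ht, _, p, hp⟩ fun _ ⟨_, _, p, hp⟩ => hB.sum_le hp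

-- Complementary slackness: every termwise inequality of weak duality is tight.
lemma IsOptDual.hadamard_gramMat [DecidableEq V] {B : Matrix V V ℝ} (hB : IsOptDual G B)
    {d : ℕ} {p : V → Fin d → ℝ} (hp : IsVecColoring G (vecChrom G) p) :
    B ⊙ gramMat p = B ⊙ (vecChrom G • (1 : Matrix V V ℝ) - allOnes V) := by
  have hle : ∀ x ∈ (Finset.univ : Finset (V × V)), B x.1 x.2 * gramMat p x.1 x.2 ≤
      B x.1 x.2 * (vecChrom G • (1 : Matrix V V ℝ) - allOnes V) x.1 x.2 :=
    fun x _ => hB.1.mul_le hp x.1 x.2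
  have hsum : ∑ x : V × V, B x.1 x.2 * gramMat p x.1 x.2 =
      ∑ x : V × V, B x.1 x.2 * (vecChrom G • (1 : Matrix V V ℝ) - allOnes V) x.1 x.2 := by
    refine le_antisymm (Finset.sum_le_sum hle) ?_
    simp only [Fintype.sum_prod_type]
    rw [sum_sum_mul_smul_one_sub_allOnes, hB.1.2.2.2, hB.2, mul_one, sub_self]
    exact sum_sum_mul_nonneg hB.1.1 (posSemidef_gramMat p)
  ext i j
  exact (Finset.sum_eq_sum_iff_of_le hle).mp hsum (i, j) (Finset.mem_univ _)

lemma IsOptDual.posSemidef_hadamard [DecidableEq V] {B : Matrix V V ℝ} (hB : IsOptDual G B) :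
    (B ⊙ (vecChrom G • (1 : Matrix V V ℝ) - allOnes V)).PosSemidef := by
  obtain ⟨p, hp⟩ := exists_isVecColoring_vecChrom G
  rw [← hB.hadamard_gramMat hp]
  exact hB.1.1.hadamard (posSemidef_gramMat p)

end WeakDuality

section PsdDominated

variable {G : SimpleGraph V}

def psdDominated (G : SimpleGraph V) : Set (Matrix V V ℝ) :=
  {M : Matrix V V ℝ | M.PosSemidef} + {N : Matrix V V ℝ | ∀ i j, (i = j ∨ G.Adj i j) → 0 < N i j}

lemma isOpen_psdDominated [Finite V] (G : SimpleGraph V) : IsOpen (psdDominated G) := by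
  refine IsOpen.add_left ?_
  simp only [Set.ofPred_forall]
  exact isOpen_iInter_of_finite fun i => isOpen_iInter_of_finite fun j =>
    isOpen_iInter_of_finite fun _ => isOpen_lt continuous_const (by fun_prop)

lemma convex_psdDominated (G : SimpleGraph V) : Convex ℝ (psdDominated G) := by
  refine Convex.add ?_ ?_
  · intro A hA B hB a b ha hb _
    exact (hA.smul ha).add (hB.smul hb)
  · intro A hA B hB a b ha hb hab i j hij
    have := hA i j hij
    have := hB i j hij
    simp only [Matrix.add_apply, Matrix.smul_apply, smul_eq_mul]
    rcases ha.eq_or_lt with rfl | ha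
    · simp_all
    · positivity

lemma psdDominated_add_posSemidef {X M : Matrix V V ℝ} (hX : X ∈ psdDominated G)
    (hM : M.PosSemidef) : X + M ∈ psdDominated G := by
  obtain ⟨A, hA, N, hN, rfl⟩ := hX
  exact ⟨A + M, hA.add hM, N, hN, add_right_comm A M N⟩

lemma psdDominated_add_of_nonneg {X N : Matrix V V ℝ} (hX : X ∈ psdDominated G)
    (hN : ∀ i j, (i = j ∨ G.Adj i j) → 0 ≤ N i j) : X + N ∈ psdDominated G := by
  obtain ⟨A, hA, N', hN', rfl⟩ := hX
  refine ⟨A, hA, N' + N, fun i j hij => ?_, (add_assoc A N' N).symm⟩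
  simpa using add_pos_of_pos_of_nonneg (hN' i j hij) (hN i j hij)

lemma allOnes_mem_psdDominated : allOnes V ∈ psdDominated G :=
  ⟨0, .zero, allOnes V, fun _ _ _ => one_pos, zero_add _⟩

lemma smul_one_sub_allOnes_notMem_psdDominated [Fintype V] [DecidableEq V] [Nonempty V] :
    vecChrom G • (1 : Matrix V V ℝ) - allOnes V ∉ psdDominated G := by
  rintro ⟨M, hM, N, hN, hMN⟩
  have hM_apply : ∀ i j, M i j = (vecChrom G • (1 : Matrix V V ℝ) - allOnes V) i j - N i j :=
    fun i j => by rw [← hMN]; simp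
  obtain ⟨k, hk⟩ := Finite.exists_max fun i => M i i
  have hle := hM.vecChrom_le hM.diag_nonneg hk fun i j hij => by
    have := hN i j (.inr hij)
    simp [hM_apply, allOnes, hij.ne]
    linarith
  have := hN k k (.inl rfl)
  simp [hM_apply, allOnes] at hle
  linarith

lemma nonneg_of_forall_add_smul_mem {E : Type*} [AddCommGroup E] [Module ℝ E] {A : Set E}
    {f : E →ₗ[ℝ] ℝ} {x a v : E} (hf : ∀ b ∈ A, f x < f b) (ha : a ∈ A)
    (hv : ∀ s : ℝ, 0 ≤ s → a + s • v ∈ A) : 0 ≤ f v := by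
  by_contra! hneg
  have hs : 0 ≤ (f a - f x) / -f v := div_nonneg (by linarith [hf a ha]) (by linarith)
  have := hf _ (hv _ hs)
  rw [map_add, map_smul, smul_eq_mul, div_mul_eq_mul_div, div_neg,
    mul_div_cancel_right₀ _ hneg.ne] at this
  linarith

lemma LinearMap.apply_eq_sum_sum_mul_single [Fintype V] [DecidableEq V]
    (f : Matrix V V ℝ →ₗ[ℝ] ℝ) (X : Matrix V V ℝ) :
    f X = ∑ i, ∑ j, f (Matrix.single i j 1) * X i j := by
  conv_lhs => rw [matrix_eq_sum_single X]
  simp only [map_sum]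
  refine Finset.sum_congr rfl fun i _ => Finset.sum_congr rfl fun j _ => ?_
  rw [← mul_one (X i j), ← smul_eq_mul, ← smul_single, map_smul, smul_eq_mul, mul_comm,
    smul_eq_mul, mul_one]

namespace psdDominated

variable {f : Matrix V V ℝ →L[ℝ] ℝ} {x : Matrix V V ℝ}

lemma apply_nonneg_of_posSemidef (hf : ∀ b ∈ psdDominated G, f x < f b) {M : Matrix V V ℝ}
    (hM : M.PosSemidef) : 0 ≤ f M :=
  nonneg_of_forall_add_smul_mem (f := (f : Matrix V V ℝ →ₗ[ℝ] ℝ)) hf allOnes_mem_psdDominated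
    fun _ hs => psdDominated_add_posSemidef allOnes_mem_psdDominated (hM.smul hs)

lemma apply_nonneg_of_nonneg (hf : ∀ b ∈ psdDominated G, f x < f b) {N : Matrix V V ℝ}
    (hN : ∀ i j, (i = j ∨ G.Adj i j) → 0 ≤ N i j) : 0 ≤ f N :=
  nonneg_of_forall_add_smul_mem (f := (f : Matrix V V ℝ →ₗ[ℝ] ℝ)) hf allOnes_mem_psdDominated
    fun _ hs => psdDominated_add_of_nonneg allOnes_mem_psdDominated fun i j hij => by
      simpa using mul_nonneg hs (hN i j hij)

lemma apply_nonpos (hf : ∀ b ∈ psdDominated G, f x < f b) : f x ≤ 0 := by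
  have hlim : Filter.Tendsto (fun s : ℝ => f (s • allOnes V)) (nhdsWithin 0 (Set.Ioi 0))
      (nhds 0) := by
    have hcont : Continuous fun s : ℝ => f (s • allOnes V) := by fun_prop
    simpa using (hcont.tendsto 0).mono_left nhdsWithin_le_nhds
  refine ge_of_tendsto hlim (eventually_nhdsWithin_of_forall fun s hs => (hf _ ?_).le)
  exact ⟨0, .zero, s • allOnes V, fun _ _ _ => by simpa [allOnes] using hs, zero_add _⟩

end psdDominated

end PsdDominated

section StrongDuality

variable [Fintype V] {G : SimpleGraph V}

lemma trace_pos_of_dotProduct_mulVec_nonneg [DecidableEq V] {Y : Matrix V V ℝ}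
    (hnonneg : ∀ i j, 0 ≤ Y i j) (hquad : ∀ x, 0 ≤ x ⬝ᵥ Y *ᵥ x) (hY : Y ≠ 0) : 0 < Y.trace := by
  refine (Finset.sum_nonneg fun i _ => hnonneg i i).lt_of_ne fun htr => hY ?_
  have hdiag : ∀ i, Y i i = 0 := fun i =>
    (Finset.sum_eq_zero_iff_of_nonneg fun i _ => hnonneg i i).mp htr.symm i (Finset.mem_univ i)
  ext i j
  rcases eq_or_ne i j with rfl | hij
  · exact hdiag i
  · have := hquad (Pi.single i 1 - Pi.single j 1)
    simp [mulVec_sub, sub_dotProduct, dotProduct_sub, hdiag] at this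
    rw [Matrix.zero_apply]
    linarith [hnonneg i j, hnonneg j i]

lemma isOptDual_of_dotProduct_mulVec_nonneg {Y : Matrix V V ℝ} (hnonneg : ∀ i j, 0 ≤ Y i j)
    (hzero : ∀ i j, i ≠ j → ¬ G.Adj i j → Y i j = 0) (hquad : ∀ x, 0 ≤ x ⬝ᵥ Y *ᵥ x)
    (htrace : 0 < Y.trace) (hval : vecChrom G * Y.trace ≤ ∑ i, ∑ j, Y i j) :
    IsOptDual G ((2 * Y.trace)⁻¹ • (Y + Yᵀ)) := by
  have hpsd : (Y + Yᵀ).PosSemidef := by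
    refine .of_dotProduct_mulVec_nonneg (by simp [IsHermitian, add_comm]) fun x => ?_
    have hT : x ⬝ᵥ Yᵀ *ᵥ x = x ⬝ᵥ Y *ᵥ x := by
      rw [mulVec_transpose, dotProduct_comm, ← dotProduct_mulVec]
    rw [star_trivial, add_mulVec, dotProduct_add, hT]
    linarith [hquad x]
  have hdual : IsDualSol G ((2 * Y.trace)⁻¹ • (Y + Yᵀ)) := by
    refine ⟨hpsd.smul (by positivity), fun i j hij hadj => ?_, fun i j => ?_, ?_⟩
    · simp [hzero i j hij hadj, hzero j i hij.symm fun h => hadj h.symm]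
    · simpa using mul_nonneg (by positivity) (add_nonneg (hnonneg i j) (hnonneg j i))
    · rw [trace_smul, trace_add, trace_transpose, smul_eq_mul]
      field_simp
      ring
  refine ⟨hdual, le_antisymm hdual.sum_le_vecChrom ?_⟩
  have hsum : ∑ i, ∑ j, ((2 * Y.trace)⁻¹ • (Y + Yᵀ)) i j = (Y.trace)⁻¹ * ∑ i, ∑ j, Y i j := by
    simp only [Matrix.smul_apply, Matrix.add_apply, transpose_apply, smul_eq_mul,
      ← Finset.mul_sum, Finset.sum_add_distrib]
    rw [Finset.sum_comm (f := fun i j => Y j i)]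
    field_simp
    ring
  rw [hsum, le_inv_mul_iff₀ htrace, mul_comm]
  exact hval

-- Separate `χ • 1 - J` from `psdDominated G`; the separating functional, read as a matrix `Y`,
-- gives an optimal dual solution after symmetrization and scaling.
theorem exists_isOptDual [Nonempty V] (G : SimpleGraph V) : ∃ B, IsOptDual G B := by
  classical
  obtain ⟨f, hf⟩ := geometric_hahn_banach_point_open (convex_psdDominated G)
    (isOpen_psdDominated G) smul_one_sub_allOnes_notMem_psdDominated
  set Y : Matrix V V ℝ := of fun i j => f (Matrix.single i j 1)
  have hfY : ∀ X, f X = ∑ i, ∑ j, Y i j * X i j :=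
    (f : Matrix V V ℝ →ₗ[ℝ] ℝ).apply_eq_sum_sum_mul_single
  have hquad : ∀ x, 0 ≤ x ⬝ᵥ Y *ᵥ x := fun x => by
    simpa [hfY, vecMulVec, dotProduct, mulVec, Finset.mul_sum, mul_assoc, mul_left_comm] using
      psdDominated.apply_nonneg_of_posSemidef hf (posSemidef_vecMulVec_self_star x)
  have hnonneg : ∀ i j, 0 ≤ Y i j := fun i j =>
    psdDominated.apply_nonneg_of_nonneg hf fun k l _ => by
      rw [single_apply]
      split_ifs <;> simp
  have hzero : ∀ i j, i ≠ j → ¬ G.Adj i j → Y i j = 0 := by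
    intro i j hij hadj
    refine le_antisymm ?_ (hnonneg i j)
    have := psdDominated.apply_nonneg_of_nonneg hf (N := -Matrix.single i j 1) fun k l hkl => by
      have hne : ¬(i = k ∧ j = l) := by
        rintro ⟨rfl, rfl⟩
        rcases hkl with rfl | h
        exacts [hij rfl, hadj h]
      simp [hne]
    simpa [Y] using this
  have hY : Y ≠ 0 := by
    rintro hY0
    simpa [hfY, hY0] using hf _ allOnes_mem_psdDominated
  have hval := psdDominated.apply_nonpos hf
  rw [hfY, sum_sum_mul_smul_one_sub_allOnes] at hval
  exact ⟨_, isOptDual_of_dotProduct_mulVec_nonneg hnonneg hzero hquad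
    (trace_pos_of_dotProduct_mulVec_nonneg hnonneg hquad hY) (by linarith)⟩

end StrongDuality

section Product

variable {G : SimpleGraph α} {H : SimpleGraph β}

lemma IsVecColoring.comp_fst [Fintype α] [Fintype β] {t : ℝ} {d : ℕ} {p : α → Fin d → ℝ}
    (hp : IsVecColoring G t p) : IsVecColoring (catProd G H) t fun x => p x.1 :=
  ⟨fun x => hp.1 x.1, fun _ _ hxy => hp.2 _ _ hxy.1⟩

lemma vecChrom_catProd_le [Fintype α] [Fintype β] (G : SimpleGraph α) (H : SimpleGraph β) :
    vecChrom (catProd G H) ≤ vecChrom G := by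
  obtain ⟨p, hp⟩ := exists_isVecColoring_vecChrom G
  exact vecChrom_le (one_le_vecChrom G) (hp.comp_fst (H := H))

lemma sum_sum_kronecker [Fintype α] [Fintype β] (A : Matrix α α ℝ) (B : Matrix β β ℝ) :
    ∑ x, ∑ y, (A ⊗ₖ B) x y = (∑ i, ∑ j, A i j) * ∑ l, ∑ k, B l k := by
  simp only [Fintype.sum_prod_type, kroneckerMap_apply, Finset.sum_mul_sum]

lemma trace_hadamard_one [Fintype α] [DecidableEq α] (A : Matrix α α ℝ) :
    (A ⊙ 1).trace = A.trace := by
  simp [trace, hadamard_apply]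

lemma sum_sum_hadamard_one [Fintype α] [DecidableEq α] (A : Matrix α α ℝ) :
    ∑ i, ∑ j, (A ⊙ 1) i j = A.trace := by
  simp [trace, hadamard_apply, one_apply]

variable [DecidableEq α] [DecidableEq β]

-- `B ⊙ 1` is the diagonal part of `B`.
noncomputable def productDual (B : Matrix α α ℝ) (C : Matrix β β ℝ) (h : ℝ) :
    Matrix (α × β) (α × β) ℝ :=
  (B ⊙ 1) ⊗ₖ (C ⊙ 1) + (h - 1)⁻¹ • ((B - B ⊙ 1) ⊗ₖ (C - C ⊙ 1))

lemma productDual_eq {B : Matrix α α ℝ} {C : Matrix β β ℝ} {g h : ℝ} (hh : 1 < h) :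
    productDual B C h = (h * (h - 1))⁻¹ • ((h - 1) • (B ⊗ₖ C) +
      (B ⊙ (g • 1 - allOnes α)) ⊗ₖ (C ⊙ (h • 1 - allOnes β)) +
      (h - g) • ((B ⊙ 1) ⊗ₖ (C ⊙ (h • 1 - allOnes β)))) := by
  have : h - 1 ≠ 0 := by linarith
  ext ⟨i, l⟩ ⟨j, k⟩
  simp only [productDual, allOnes, Matrix.add_apply, Matrix.sub_apply, Matrix.smul_apply,
    kroneckerMap_apply, hadamard_apply, one_apply, of_apply, smul_eq_mul]
  split_ifs <;> field_simp <;> ring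

variable [Fintype α] [Fintype β]

lemma posSemidef_productDual {B : Matrix α α ℝ} {C : Matrix β β ℝ} (hB : IsOptDual G B)
    (hC : IsOptDual H C) (hGH : vecChrom G ≤ vecChrom H) (hH : 1 < vecChrom H) :
    (productDual B C (vecChrom H)).PosSemidef := by
  rw [productDual_eq (g := vecChrom G) hH]
  have hD : (B ⊙ 1).PosSemidef := hB.1.1.hadamard .one
  refine .smul (((hB.1.1.kronecker hC.1.1).smul (by linarith)).add
    (hB.posSemidef_hadamard.kronecker hC.posSemidef_hadamard) |>.add
    ((hD.kronecker hC.posSemidef_hadamard).smul (by linarith))) ?_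
  have : 0 < vecChrom H * (vecChrom H - 1) := by nlinarith
  positivity

lemma isDualSol_productDual {B : Matrix α α ℝ} {C : Matrix β β ℝ} (hB : IsOptDual G B)
    (hC : IsOptDual H C) (hGH : vecChrom G ≤ vecChrom H) (hH : 1 < vecChrom H) :
    IsDualSol (catProd G H) (productDual B C (vecChrom H)) := by
  refine ⟨posSemidef_productDual hB hC hGH hH, ?_, ?_, ?_⟩
  · obtain ⟨⟨-, hB0, -, -⟩, -⟩ := hB
    obtain ⟨⟨-, hC0, -, -⟩, -⟩ := hC
    rintro ⟨i, l⟩ ⟨j, k⟩ hne hadj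
    simp only [productDual, Matrix.add_apply, Matrix.sub_apply, Matrix.smul_apply,
      kroneckerMap_apply, hadamard_apply, one_apply, smul_eq_mul]
    by_cases hij : i = j <;> by_cases hlk : l = k
    · simp_all
    · simp [hij, hlk]
    · simp [hij, hlk]
    · have : B i j = 0 ∨ C l k = 0 := by
        by_contra! h
        exact hadj ⟨by_contra fun h' => h.1 (hB0 i j hij h'),
          by_contra fun h' => h.2 (hC0 l k hlk h')⟩
      rcases this with h | h <;> simp [hij, hlk, h]
  · rintro ⟨i, l⟩ ⟨j, k⟩
    have : 0 ≤ (vecChrom H - 1)⁻¹ := by simp only [inv_nonneg]; linarith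
    have := hB.1.2.2.1 i j
    have := hC.1.2.2.1 l k
    simp only [productDual, Matrix.add_apply, Matrix.sub_apply, Matrix.smul_apply,
      kroneckerMap_apply, hadamard_apply, one_apply, smul_eq_mul]
    split_ifs <;> simp <;> positivity
  · rw [productDual, trace_add, trace_smul, trace_kronecker, trace_kronecker, trace_sub,
      trace_sub, trace_hadamard_one, trace_hadamard_one, hB.1.2.2.2, hC.1.2.2.2]
    simp

lemma sum_productDual {B : Matrix α α ℝ} {C : Matrix β β ℝ} (hB : IsOptDual G B)
    (hC : IsOptDual H C) (hH : 1 < vecChrom H) :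
    ∑ x, ∑ y, productDual B C (vecChrom H) x y = vecChrom G := by
  have : vecChrom H - 1 ≠ 0 := by linarith
  simp only [productDual, Matrix.add_apply, Matrix.smul_apply, smul_eq_mul,
    Finset.sum_add_distrib, ← Finset.mul_sum, sum_sum_kronecker]
  simp only [Matrix.sub_apply, Finset.sum_sub_distrib, sum_sum_hadamard_one, hB.1.2.2.2,
    hC.1.2.2.2, hB.2, hC.2]
  field_simp
  ring

end Product

theorem vecChrom_catProd_of_le [Fintype α] [Fintype β] {G : SimpleGraph α} {H : SimpleGraph β}
    (hGH : vecChrom G ≤ vecChrom H) : vecChrom (catProd G H) = vecChrom G := by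
  classical
  refine le_antisymm (vecChrom_catProd_le G H) ?_
  rcases (one_le_vecChrom G).eq_or_lt with hG | hG
  · exact hG ▸ one_le_vecChrom _
  have hH : 1 < vecChrom H := hG.trans_le hGH
  obtain ⟨i, -, -⟩ := exists_adj_of_one_lt_vecChrom hG
  obtain ⟨l, -, -⟩ := exists_adj_of_one_lt_vecChrom hH
  have : Nonempty α := ⟨i⟩
  have : Nonempty β := ⟨l⟩
  obtain ⟨B, hB⟩ := exists_isOptDual G
  obtain ⟨C, hC⟩ := exists_isOptDual H
  rw [← sum_productDual hB hC hH]
  exact (isDualSol_productDual hB hC hGH hH).sum_le_vecChrom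

section Rank

variable [Fintype V] {G : SimpleGraph V}

lemma bddAbove_rank_isOptGram (G : SimpleGraph V) :
    BddAbove {r | ∃ M : Matrix V V ℝ, IsOptGram G M ∧ M.rank = r} :=
  ⟨Fintype.card V, by rintro _ ⟨M, -, rfl⟩; exact M.rank_le_card_width⟩

lemma IsOptGram.rank_le_grk {M : Matrix V V ℝ} (hM : IsOptGram G M) : M.rank ≤ grk G :=
  le_csSup (bddAbove_rank_isOptGram G) ⟨M, hM, rfl⟩

lemma grk_le {r : ℕ} (h : ∀ M, IsOptGram G M → M.rank ≤ r) : grk G ≤ r :=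
  csSup_le' (by rintro _ ⟨M, hM, rfl⟩; exact h M hM)

lemma exists_isOptGram_rank_eq_grk (G : SimpleGraph V) :
    ∃ M, IsOptGram G M ∧ M.rank = grk G := by
  obtain ⟨p, hp⟩ := exists_isVecColoring_vecChrom G
  exact Nat.sSup_mem (s := {r | ∃ M : Matrix V V ℝ, IsOptGram G M ∧ M.rank = r})
    ⟨_, gramMat p, ⟨_, p, hp, rfl⟩, rfl⟩ (bddAbove_rank_isOptGram G)

lemma IsOptGram.convex_comb {A B : Matrix V V ℝ} (hA : IsOptGram G A) (hB : IsOptGram G B)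
    {a b : ℝ} (ha : 0 ≤ a) (hb : 0 ≤ b) (hab : a + b = 1) : IsOptGram G (a • A + b • B) := by
  rw [isOptGram_iff] at hA hB ⊢
  refine ⟨(hA.1.smul ha).add (hB.1.smul hb), fun i => ?_, fun i j hij => ?_⟩
  · simp only [Matrix.add_apply, Matrix.smul_apply, smul_eq_mul, hA.2.1 i, hB.2.1 i]
    rw [← add_mul, hab, one_mul]
  · simp only [Matrix.add_apply, Matrix.smul_apply, smul_eq_mul]
    nlinarith [hA.2.2 i j hij, hB.2.2 i j hij]

lemma Matrix.PosSemidef.mulVec_eq_zero_of_add {A B : Matrix V V ℝ} (hA : A.PosSemidef)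
    (hB : B.PosSemidef) {x : V → ℝ} (hx : (A + B) *ᵥ x = 0) : A *ᵥ x = 0 := by
  have h := congrArg (x ⬝ᵥ ·) hx
  simp only [add_mulVec, dotProduct_add, dotProduct_zero] at h
  have hA0 := hA.dotProduct_mulVec_nonneg x
  have hB0 := hB.dotProduct_mulVec_nonneg x
  rw [star_trivial] at hA0 hB0
  rw [← hA.dotProduct_mulVec_zero_iff, star_trivial]
  linarith

-- The midpoint `N` of `W` and `K` is optimal, so `rank N ≤ rank K`; as `ker N = ker W ⊓ ker K`,
-- this forces `ker N = ker K`.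
lemma IsOptGram.ker_le_of_rank_max {K W : Matrix V V ℝ} (hK : IsOptGram G K)
    (hmax : ∀ M, IsOptGram G M → M.rank ≤ K.rank) (hW : IsOptGram G W) :
    LinearMap.ker K.mulVecLin ≤ LinearMap.ker W.mulVecLin := by
  set N := (1 / 2 : ℝ) • W + (1 / 2 : ℝ) • K
  have hN : IsOptGram G N := hW.convex_comb hK (by norm_num) (by norm_num) (by norm_num)
  have hW' := (isOptGram_iff.mp hW).1.smul (by norm_num : (0 : ℝ) ≤ 1 / 2)
  have hK' := (isOptGram_iff.mp hK).1.smul (by norm_num : (0 : ℝ) ≤ 1 / 2)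
  have hker : ∀ {A : Matrix V V ℝ} (x : V → ℝ), ((1 / 2 : ℝ) • A) *ᵥ x = 0 → A *ᵥ x = 0 :=
    fun x hx => by simpa [smul_mulVec] using hx
  have hNW : LinearMap.ker N.mulVecLin ≤ LinearMap.ker W.mulVecLin := fun x hx =>
    hker x (hW'.mulVec_eq_zero_of_add hK' hx)
  have hNK : LinearMap.ker N.mulVecLin ≤ LinearMap.ker K.mulVecLin := fun x hx =>
    hker x (hK'.mulVec_eq_zero_of_add hW' (by rw [add_comm]; exact hx))
  have hNK_eq : LinearMap.ker N.mulVecLin = LinearMap.ker K.mulVecLin := by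
    refine Submodule.eq_of_le_of_finrank_le hNK ?_
    have hN_rank := N.mulVecLin.finrank_range_add_finrank_ker
    have hK_rank := K.mulVecLin.finrank_range_add_finrank_ker
    have : N.rank ≤ K.rank := hmax N hN
    unfold Matrix.rank at this
    omega
  exact hNK_eq ▸ hNW

end Rank

lemma col_eq_of_ker_le [Fintype V] [DecidableEq V] {K W : Matrix V V ℝ}
    (hker : LinearMap.ker K.mulVecLin ≤ LinearMap.ker W.mulVecLin) {c c' : V}
    (hK : ∀ x, K x c = K x c') (x : V) : W x c = W x c' := by
  have hv : Pi.single c 1 - Pi.single c' 1 ∈ LinearMap.ker K.mulVecLin := by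
    ext y
    simp [mulVec_sub, hK]
  have := congrFun (hker hv) x
  simp only [mulVecLin_apply, mulVec_sub, mulVec_single_one, Pi.sub_apply, col_apply,
    Pi.zero_apply] at this
  linarith

section InducedColorings

variable [Fintype α] [Fintype β] {G : SimpleGraph α} {H : SimpleGraph β}

lemma IsOptGram.kronecker_allOnes (hχ : vecChrom (catProd G H) = vecChrom G)
    {M : Matrix α α ℝ} (hM : IsOptGram G M) : IsOptGram (catProd G H) (M ⊗ₖ allOnes β) := by
  obtain ⟨d, p, hp, rfl⟩ := hM
  exact ⟨d, fun x => p x.1, hχ ▸ hp.comp_fst, (gramMat_comp_fst p).symm⟩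

lemma IsOptGram.rank_kronecker_allOnes [Nonempty β] {M : Matrix α α ℝ} (hM : IsOptGram G M) :
    (M ⊗ₖ allOnes β).rank = M.rank := by
  obtain ⟨d, p, -, rfl⟩ := hM
  rw [← gramMat_comp_fst, rank_gramMat_comp_fst]

lemma IsOptGram.exists_eq_kronecker_allOnes (hχ : vecChrom (catProd G H) = vecChrom G)
    {l₀ k₀ : β} (hlk : H.Adj l₀ k₀) {W : Matrix (α × β) (α × β) ℝ} (hW : IsOptGram (catProd G H) W)
    (hcol : ∀ x j k k', W x (j, k) = W x (j, k')) :
    ∃ M : Matrix α α ℝ, IsOptGram G M ∧ W = M ⊗ₖ allOnes β := by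
  obtain ⟨hpsd, hdiag, hadj⟩ := isOptGram_iff.mp hW
  have hsymm : ∀ x y, W x y = W y x := fun x y => hpsd.isHermitian.apply y x
  set M : Matrix α α ℝ := W.submatrix (fun i => (i, l₀)) (fun i => (i, l₀))
  have hWM : ∀ i l j k, W (i, l) (j, k) = M i j := fun i l j k => by
    rw [hcol _ j k l₀, hsymm, hcol _ i l l₀, hsymm]
    rfl
  refine ⟨M, isOptGram_iff.mpr ⟨hpsd.submatrix _, fun i => ?_, fun i j hij => ?_⟩, ?_⟩
  · exact hχ ▸ hdiag (i, l₀)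
  · rw [← hWM i l₀ j k₀]
    exact hadj _ _ ⟨hij, hlk⟩
  · ext ⟨i, l⟩ ⟨j, k⟩
    simp [hWM, allOnes]

end InducedColorings

end RankProduct

/-- If `χ_v(G) < χ_v(H)` then `rk(G × H) ≥ rk(G)`, with equality iff
every optimal vector coloring of `G × H` is induced by `G` (its Gram matrix is `M ⊗ J`
with `M` the Gram matrix of an optimal vector coloring of `G`). -/
theorem rank_product_of_lt {α β : Type*} [Fintype α] [Fintype β]
    (G : SimpleGraph α) (H : SimpleGraph β) (h : vecChrom G < vecChrom H) :
    grk G ≤ grk (catProd G H) ∧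
      (grk (catProd G H) = grk G ↔
        ∀ W : Matrix (α × β) (α × β) ℝ, IsOptGram (catProd G H) W →
          ∃ M : Matrix α α ℝ, IsOptGram G M ∧ W = M ⊗ₖ allOnes β) := by
  classical
  have hχ := vecChrom_catProd_of_le h.le
  obtain ⟨l₀, k₀, hlk⟩ := exists_adj_of_one_lt_vecChrom ((one_le_vecChrom G).trans_lt h)
  have : Nonempty β := ⟨l₀⟩
  obtain ⟨M₀, hM₀, hM₀_rank⟩ := exists_isOptGram_rank_eq_grk G
  have hK := hM₀.kronecker_allOnes hχ (H := H)
  have hK_rank : (M₀ ⊗ₖ allOnes β).rank = grk G := hM₀.rank_kronecker_allOnes.trans hM₀_rank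
  have hle : grk G ≤ grk (catProd G H) := hK_rank ▸ hK.rank_le_grk
  refine ⟨hle, fun heq W hW => ?_, fun hind => le_antisymm (grk_le fun W hW => ?_) hle⟩
  · have hker := hK.ker_le_of_rank_max (fun M hM => hK_rank ▸ heq ▸ hM.rank_le_grk) hW
    exact hW.exists_eq_kronecker_allOnes hχ hlk fun x j k k' =>
      col_eq_of_ker_le hker (fun y => by simp [allOnes]) x
  · obtain ⟨M, hM, rfl⟩ := hind W hW
    exact hM.rank_kronecker_allOnes.trans_le hM.rank_le_grk
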